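/- Let Γ be a group, n a natural number, and ρ : Γ → O(2n+1,ℂ) an irreducible representation. Suppose there exists P ∈ GL(2n+1,ℂ) such that P·ρ(γ)·P⁻¹ = conj(ρ(γ)) for all γ ∈ Γ. Then there exist natural numbers p, q with p + q = 2n+1 and a matrix Q ∈ O(2n+1,ℂ) such that for all γ ∈ Γ the matrix D_{p,q}⁻¹·Q·ρ(γ)·Q⁻¹·D_{p,q} has real entries and satisfies ᵀX·I_{p,q}·X = I_{p,q} (where X = D_{p,q}⁻¹·Q·ρ(γ)·Q⁻¹·D_{p,q}); that is, ρ is conjugate in O(2n+1,ℂ) to a representation with values in the copy 𝒪_{p,q} = D_{p,q}·O(p,q)·D_{p,q}⁻¹ of O(p,q). -/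

import Mathlib

open Matrix

noncomputable section

/-- `M ∈ O(m,ℂ)`, i.e. `ᵀM M = Iₘ`. -/
def IsOrthoC {m : ℕ} (M : Matrix (Fin m) (Fin m) ℂ) : Prop :=
  Mᵀ * M = 1

/-- The matrix `I_{p,q} = diag(I_p, −I_q)` (of size `m`, with `p + q = m`). -/
def Ipq (m p : ℕ) : Matrix (Fin m) (Fin m) ℂ :=
  Matrix.diagonal (fun i => if (i : ℕ) < p then 1 else -1)

/-- The matrix `D_{p,q} = diag(I_p, i·I_q)` (of size `m`, with `p + q = m`). -/
def Dpq (m p : ℕ) : Matrix (Fin m) (Fin m) ℂ :=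
  Matrix.diagonal (fun i => if (i : ℕ) < p then 1 else Complex.I)

/-- A representation `ρ : Γ → GL(n,ℂ)` is irreducible if the only invariant
subspaces of `ℂⁿ` are `{0}` and `ℂⁿ`. -/
def MatIrreducible {Γ : Type*} [Group Γ] {ι : Type*} [Fintype ι] [DecidableEq ι]
    (ρ : Γ →* Matrix.GeneralLinearGroup ι ℂ) : Prop :=
  ∀ W : Submodule ℂ (ι → ℂ),
    (∀ γ : Γ, ∀ x ∈ W, Matrix.mulVec (ρ γ : Matrix ι ι ℂ) x ∈ W) →
      W = ⊥ ∨ W = ⊤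

/-! ### Auxiliary lemmas -/

lemma schur_aux {Γ : Type*} [Group Γ] {m : ℕ} (hm : 0 < m)
    (ρ : Γ →* Matrix.GeneralLinearGroup (Fin m) ℂ) (hirr : MatIrreducible ρ)
    (A : Matrix (Fin m) (Fin m) ℂ)
    (hA : ∀ γ : Γ, A * (ρ γ : Matrix (Fin m) (Fin m) ℂ)
        = (ρ γ : Matrix (Fin m) (Fin m) ℂ) * A) :
    ∃ c : ℂ, A = c • (1 : Matrix (Fin m) (Fin m) ℂ) := by
  have i0 : Fin m := ⟨0, hm⟩
  haveI : Nontrivial (Fin m → ℂ) :=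
    ⟨Pi.single i0 1, 0, by
      intro h
      have := congrFun h i0
      simp [Pi.single_apply] at this⟩
  obtain ⟨c, hc⟩ := Module.End.exists_eigenvalue (Matrix.mulVecLin A)
  obtain ⟨x, hx⟩ := hc.exists_hasEigenvector
  set W := Module.End.eigenspace (Matrix.mulVecLin A) c with hW
  have hinv : ∀ γ : Γ, ∀ y ∈ W,
      Matrix.mulVec (ρ γ : Matrix (Fin m) (Fin m) ℂ) y ∈ W := by
    intro γ y hy
    rw [hW, Module.End.mem_eigenspace_iff] at hy ⊢
    have : A *ᵥ ((ρ γ : Matrix (Fin m) (Fin m) ℂ) *ᵥ y)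
        = (ρ γ : Matrix (Fin m) (Fin m) ℂ) *ᵥ (A *ᵥ y) := by
      rw [Matrix.mulVec_mulVec, Matrix.mulVec_mulVec, hA]
    rw [Matrix.mulVecLin_apply] at hy ⊢
    rw [this, hy, Matrix.mulVec_smul]
  rcases hirr W hinv with h | h
  · exfalso
    have hxW : x ∈ W := hx.1
    rw [h] at hxW
    exact hx.2 (by simpa using hxW)
  · refine ⟨c, ?_⟩
    ext i j
    have hj : (Pi.single j 1 : Fin m → ℂ) ∈ W := h ▸ Submodule.mem_top
    rw [hW, Module.End.mem_eigenspace_iff] at hj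
    have := congrFun hj i
    simpa [Matrix.mulVecLin_apply, Matrix.mulVec_single, Matrix.one_apply,
      Pi.single_apply, mul_comm] using this

lemma mono_count {m : ℕ} (g : Fin m → ℕ) (hg : Monotone g) (i : Fin m) :
    g i = 0 ↔ (i : ℕ) < (Finset.univ.filter (fun j => g j = 0)).card := by
  constructor
  · intro h
    have hsub : Finset.Iic i ⊆ Finset.univ.filter (fun j => g j = 0) := by
      intro j hj
      simp only [Finset.mem_Iic] at hj
      simp only [Finset.mem_filter, Finset.mem_univ, true_and]
      have := hg hj
      omega
    have := Finset.card_le_card hsub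
    rw [Fin.card_Iic] at this
    omega
  · intro h
    by_contra hne
    have hsub : Finset.univ.filter (fun j => g j = 0) ⊆ Finset.Iio i := by
      intro j hj
      simp only [Finset.mem_filter, Finset.mem_univ, true_and] at hj
      simp only [Finset.mem_Iio]
      by_contra hji
      have hij : i ≤ j := not_lt.mp hji
      have := hg hij
      omega
    have := Finset.card_le_card hsub
    rw [Fin.card_Iio] at this
    omega


lemma star_mulVec' {m : ℕ} (A : Matrix (Fin m) (Fin m) ℂ) (v : Fin m → ℂ) :
    star (A *ᵥ v) = A.map (starRingEnd ℂ) *ᵥ star v := by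
  funext i
  simp [Matrix.mulVec, dotProduct, map_sum, Matrix.map_apply]

def sigmaL {m : ℕ} (K : Matrix (Fin m) (Fin m) ℂ) : (Fin m → ℂ) →ₗ[ℝ] (Fin m → ℂ) where
  toFun x := K *ᵥ star x
  map_add' x y := by
    show K *ᵥ star (x + y) = K *ᵥ star x + K *ᵥ star y
    rw [star_add, Matrix.mulVec_add]
  map_smul' r x := by
    show K *ᵥ star (r • x) = r • (K *ᵥ star x)
    rw [star_smul, star_trivial, Matrix.mulVec_smul]

lemma sigmaL_apply {m : ℕ} (K : Matrix (Fin m) (Fin m) ℂ) (x : Fin m → ℂ) :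
    sigmaL K x = K *ᵥ star x := rfl

lemma sigmaL_smulC {m : ℕ} (K : Matrix (Fin m) (Fin m) ℂ) (c : ℂ) (x : Fin m → ℂ) :
    sigmaL K (c • x) = (starRingEnd ℂ) c • sigmaL K x := by
  rw [sigmaL_apply, sigmaL_apply, star_smul, Matrix.mulVec_smul]
  rfl

def realForm {m : ℕ} (K : Matrix (Fin m) (Fin m) ℂ) : Submodule ℝ (Fin m → ℂ) where
  carrier := {x | sigmaL K x = x}
  add_mem' := by
    intro a b ha hb
    simp only [Set.mem_setOf_eq, map_add] at *
    rw [ha, hb]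
  zero_mem' := by simp only [Set.mem_setOf_eq, map_zero]
  smul_mem' := by
    intro r x hx
    simp only [Set.mem_setOf_eq] at *
    rw [LinearMap.map_smul, hx]

lemma mem_realForm {m : ℕ} {K : Matrix (Fin m) (Fin m) ℂ} {x : Fin m → ℂ} :
    x ∈ realForm K ↔ sigmaL K x = x := Iff.rfl

section rf
variable {m : ℕ} {K P₂ : Matrix (Fin m) (Fin m) ℂ}
  (h1 : K * P₂ = 1) (h2 : P₂ * K = 1) (hK : K.map (starRingEnd ℂ) = P₂)

include h1 hK in
lemma sigmaL_invol (x : Fin m → ℂ) : sigmaL K (sigmaL K x) = x := by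
  rw [sigmaL_apply, sigmaL_apply, star_mulVec', hK, Matrix.mulVec_mulVec, h1,
    star_star, Matrix.one_mulVec]

include h1 hK in
lemma realForm_decomp (z : Fin m → ℂ) :
    ∃ u ∈ realForm K, ∃ w ∈ realForm K, z = u + Complex.I • w := by
  refine ⟨(1/2 : ℝ) • (z + sigmaL K z), ?_, (1/2 : ℝ) • ((-Complex.I) • (z - sigmaL K z)), ?_, ?_⟩
  · rw [mem_realForm, LinearMap.map_smul, map_add, sigmaL_invol h1 hK, add_comm]
  · rw [mem_realForm, LinearMap.map_smul, sigmaL_smulC, map_sub, sigmaL_invol h1 hK]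
    congr 1
    simp only [map_neg, Complex.conj_I, neg_neg]
    rw [smul_sub, smul_sub, neg_smul, neg_smul, neg_sub_neg]
  · funext i
    set s := sigmaL K z i with hs
    simp only [Pi.add_apply, Pi.smul_apply, Pi.sub_apply, smul_eq_mul,
      Complex.real_smul, Complex.ofReal_div, Complex.ofReal_one, Complex.ofReal_ofNat, ← hs]
    have hI : Complex.I * Complex.I = -1 := Complex.I_mul_I
    linear_combination ((1/2) * (z i - s)) * hI

include h1 h2 hK in
lemma finrank_realForm : Module.finrank ℝ (realForm K) = m := by
  classical
  let f : (realForm K × realForm K) →ₗ[ℝ] (Fin m → ℂ) :=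
    (realForm K).subtype.coprod
      (((LinearMap.lsmul ℂ (Fin m → ℂ) Complex.I).restrictScalars ℝ).comp (realForm K).subtype)
  have hf : Function.Bijective f := by
    constructor
    · rw [← LinearMap.ker_eq_bot, Submodule.eq_bot_iff]
      rintro ⟨u, w⟩ huw
      simp only [LinearMap.mem_ker, LinearMap.coprod_apply, LinearMap.comp_apply,
        LinearMap.restrictScalars_apply, LinearMap.lsmul_apply, Submodule.coe_subtype, f] at huw
      have hσ : sigmaL K ((u : Fin m → ℂ) + Complex.I • (w : Fin m → ℂ)) = 0 := by
        rw [huw, map_zero]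
      rw [map_add, sigmaL_smulC, u.2, w.2, Complex.conj_I] at hσ
      have hu : (u : Fin m → ℂ) = 0 := by
        have := congrArg₂ (· + ·) huw hσ
        simp only [add_zero] at this
        have h2u : (2 : ℂ) • (u : Fin m → ℂ) = 0 := by
          rw [two_smul]
          calc (u : Fin m → ℂ) + u = ((u : Fin m → ℂ) + Complex.I • w) + ((u : Fin m → ℂ) + (-Complex.I) • w) := by
                rw [neg_smul]; abel
          _ = 0 := by rw [huw, hσ, add_zero]
        simpa using smul_eq_zero.mp h2u |>.resolve_left (by norm_num)
      have hw : (w : Fin m → ℂ) = 0 := by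
        rw [hu, zero_add] at huw
        have := smul_eq_zero.mp huw
        exact this.resolve_left Complex.I_ne_zero
      exact Prod.ext (by exact_mod_cast Subtype.ext hu) (by exact_mod_cast Subtype.ext hw)
    · intro z
      obtain ⟨u, hu, w, hw, hz⟩ := realForm_decomp h1 hK z
      exact ⟨(⟨u, hu⟩, ⟨w, hw⟩), hz.symm⟩
  have e := LinearEquiv.ofBijective f hf
  have h1' : Module.finrank ℝ (realForm K × realForm K) = Module.finrank ℝ (Fin m → ℂ) :=
    e.finrank_eq
  have h2' : Module.finrank ℝ (Fin m → ℂ) = 2 * m := by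
    rw [Module.finrank_pi_fintype]
    simp [Complex.finrank_real_complex, mul_comm]
  rw [Module.finrank_prod, h2'] at h1'
  omega

end rf

section main
variable {m : ℕ}

lemma map_conj_conj (A : Matrix (Fin m) (Fin m) ℂ) :
    (A.map (starRingEnd ℂ)).map (starRingEnd ℂ) = A := by
  ext i j; simp

lemma map_conj_mul (A B : Matrix (Fin m) (Fin m) ℂ) :
    (A * B).map (starRingEnd ℂ) = A.map (starRingEnd ℂ) * B.map (starRingEnd ℂ) :=
  Matrix.map_mul

lemma map_conj_one : (1 : Matrix (Fin m) (Fin m) ℂ).map (starRingEnd ℂ) = 1 :=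
  Matrix.map_one _ (map_zero _) (map_one _)

lemma map_conj_smul (c : ℂ) (A : Matrix (Fin m) (Fin m) ℂ) :
    (c • A).map (starRingEnd ℂ) = (starRingEnd ℂ) c • A.map (starRingEnd ℂ) := by
  ext i j; simp

lemma map_conj_transpose (A : Matrix (Fin m) (Fin m) ℂ) :
    (Aᵀ).map (starRingEnd ℂ) = (A.map (starRingEnd ℂ))ᵀ := rfl

set_option maxHeartbeats 2000000 in
theorem main_aux {Γ : Type*} [Group Γ] (hodd : Odd m)
    (ρ : Γ →* Matrix.GeneralLinearGroup (Fin m) ℂ)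
    (ho : ∀ γ : Γ, IsOrthoC (ρ γ : Matrix (Fin m) (Fin m) ℂ))
    (hirr : MatIrreducible ρ)
    (P : Matrix (Fin m) (Fin m) ℂ) (hP : IsUnit P)
    (hconj : ∀ γ : Γ,
      P * (ρ γ : Matrix (Fin m) (Fin m) ℂ) * P⁻¹
        = (ρ γ : Matrix (Fin m) (Fin m) ℂ).map (starRingEnd ℂ)) :
    ∃ p q : ℕ, p + q = m ∧
      ∃ Q : Matrix (Fin m) (Fin m) ℂ, IsOrthoC Q ∧
        ∀ γ : Γ,
          ((Dpq m p)⁻¹ * Q * (ρ γ : Matrix (Fin m) (Fin m) ℂ)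
              * Q⁻¹ * Dpq m p).map (starRingEnd ℂ)
            = (Dpq m p)⁻¹ * Q * (ρ γ : Matrix (Fin m) (Fin m) ℂ)
              * Q⁻¹ * Dpq m p ∧
          ((Dpq m p)⁻¹ * Q * (ρ γ : Matrix (Fin m) (Fin m) ℂ)
              * Q⁻¹ * Dpq m p)ᵀ * Ipq m p *
            ((Dpq m p)⁻¹ * Q * (ρ γ : Matrix (Fin m) (Fin m) ℂ)
              * Q⁻¹ * Dpq m p)
            = Ipq m p := by
  classical
  have hm : 0 < m := hodd.pos
  set M : Γ → Matrix (Fin m) (Fin m) ℂ := fun γ => (ρ γ : Matrix (Fin m) (Fin m) ℂ) with hM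
  have hMorth : ∀ γ, (M γ)ᵀ * M γ = 1 := fun γ => ho γ
  have hMorth' : ∀ γ, M γ * (M γ)ᵀ = 1 := fun γ => mul_eq_one_comm.mp (hMorth γ)
  have hCorth : ∀ γ, ((M γ).map (starRingEnd ℂ))ᵀ * (M γ).map (starRingEnd ℂ) = 1 := by
    intro γ
    rw [← map_conj_transpose, ← map_conj_mul, hMorth, map_conj_one]
  have hCorth' : ∀ γ, (M γ).map (starRingEnd ℂ) * ((M γ).map (starRingEnd ℂ))ᵀ = 1 :=
    fun γ => mul_eq_one_comm.mp (hCorth γ)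
  have hPdet : IsUnit P.det := (Matrix.isUnit_iff_isUnit_det P).mp hP
  have hPc : ∀ γ, P * M γ = (M γ).map (starRingEnd ℂ) * P := by
    intro γ
    calc P * M γ = P * M γ * (P⁻¹ * P) := by
          rw [Matrix.nonsing_inv_mul P hPdet, mul_one]
      _ = (P * M γ * P⁻¹) * P := by noncomm_ring
      _ = (M γ).map (starRingEnd ℂ) * P := by rw [hconj γ]
  haveI : Nontrivial (Matrix (Fin m) (Fin m) ℂ) := by
    constructor
    refine ⟨1, 0, fun h => ?_⟩
    have := congrFun (congrFun h ⟨0, hm⟩) ⟨0, hm⟩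
    simp [Matrix.one_apply] at this
  -- conj hPc
  have hbar : ∀ γ, P.map (starRingEnd ℂ) * (M γ).map (starRingEnd ℂ)
      = M γ * P.map (starRingEnd ℂ) := by
    intro γ
    have := congrArg (Matrix.map · (starRingEnd ℂ)) (hPc γ)
    simpa only [map_conj_mul, map_conj_conj] using this
  -- Schur 1 : P̄ P = μ • 1
  obtain ⟨μ, hμ⟩ := schur_aux hm ρ hirr (P.map (starRingEnd ℂ) * P) (by
    intro γ
    calc P.map (starRingEnd ℂ) * P * M γ
        = P.map (starRingEnd ℂ) * ((M γ).map (starRingEnd ℂ) * P) := by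
          rw [← hPc γ]; noncomm_ring
      _ = (P.map (starRingEnd ℂ) * (M γ).map (starRingEnd ℂ)) * P := by noncomm_ring
      _ = M γ * (P.map (starRingEnd ℂ) * P) := by rw [hbar γ]; noncomm_ring)
  -- μ is real and positive
  have hPbar_det : IsUnit (P.map (starRingEnd ℂ)).det := by
    rw [← RingHom.mapMatrix_apply, ← RingHom.map_det]
    simpa using hPdet.ne_zero
  have hPne : P ≠ 0 := by
    intro h
    exact (hP.ne_zero) h
  have hμconj : (starRingEnd ℂ) μ = μ := by
    have h1' : P * (P.map (starRingEnd ℂ) * P) = μ • P := by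
      rw [hμ, mul_smul_comm, mul_one]
    have h2' : (P * P.map (starRingEnd ℂ)) * P = ((starRingEnd ℂ) μ) • P := by
      have hcm : P * P.map (starRingEnd ℂ) = (starRingEnd ℂ) μ • 1 := by
        have := congrArg (Matrix.map · (starRingEnd ℂ)) hμ
        simpa only [map_conj_mul, map_conj_conj, map_conj_smul, map_conj_one] using this
      rw [hcm, smul_mul_assoc, one_mul]
    rw [← mul_assoc] at h1'
    have := h1'.symm.trans h2'
    have hsub : (μ - (starRingEnd ℂ) μ) • P = 0 := by
      rw [sub_smul, this, sub_self]
    rcases smul_eq_zero.mp hsub with h | h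
    · have : μ = (starRingEnd ℂ) μ := by
        have := sub_eq_zero.mp h
        linear_combination this
      exact this.symm
    · exact absurd h hPne
  obtain ⟨r, hr⟩ : ∃ r : ℝ, (r : ℂ) = μ := ⟨μ.re, Complex.conj_eq_iff_re.mp hμconj⟩
  have hμdet : (μ : ℂ) ^ m = (starRingEnd ℂ) P.det * P.det := by
    have := congrArg Matrix.det hμ
    rw [Matrix.det_mul, Matrix.det_smul, Matrix.det_one, mul_one] at this
    rw [Fintype.card_fin] at this
    rw [RingHom.map_det, RingHom.mapMatrix_apply]
    exact this.symm
  have hrpos : 0 < r := by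
    have h1' : ((r ^ m : ℝ) : ℂ) = ((Complex.normSq P.det : ℝ) : ℂ) := by
      push_cast
      rw [hr, hμdet, ← Complex.mul_conj]
      ring
    have h2' : r ^ m = Complex.normSq P.det := Complex.ofReal_injective h1'
    have h3' : 0 < Complex.normSq P.det := Complex.normSq_pos.mpr hPdet.ne_zero
    by_contra hr0
    push_neg at hr0
    have := hodd.pow_nonpos hr0
    rw [h2'] at this
    linarith
  -- normalize : P₁ = s⁻¹ • P with s = √r, so that conj(P₁) * P₁ = 1
  set s : ℝ := Real.sqrt r with hs
  have hspos : 0 < s := Real.sqrt_pos.mpr hrpos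
  have hs2 : (s : ℂ) * s = μ := by
    rw [← hr]
    norm_cast
    rw [hs]
    exact Real.mul_self_sqrt hrpos.le
  set P₁ : Matrix (Fin m) (Fin m) ℂ := ((s : ℂ))⁻¹ • P with hP₁
  have hsne : (s : ℂ) ≠ 0 := by
    exact_mod_cast hspos.ne'
  have hP₁det : IsUnit P₁.det := by
    rw [hP₁, Matrix.det_smul, Fintype.card_fin]
    exact (IsUnit.pow m (isUnit_iff_ne_zero.mpr (inv_ne_zero hsne))).mul hPdet
  have hP₁ne : P₁ ≠ 0 := by
    intro h
    exact ((Matrix.isUnit_iff_isUnit_det P₁).mpr hP₁det).ne_zero h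
  have hPc₁ : ∀ γ, P₁ * M γ = (M γ).map (starRingEnd ℂ) * P₁ := by
    intro γ
    rw [hP₁, smul_mul_assoc, mul_smul_comm, hPc γ]
  have hbar₁ : P₁.map (starRingEnd ℂ) = ((s : ℂ))⁻¹ • P.map (starRingEnd ℂ) := by
    rw [hP₁, map_conj_smul]
    congr 1
    rw [map_inv₀, Complex.conj_ofReal]
  have hreal₁ : P₁.map (starRingEnd ℂ) * P₁ = 1 := by
    rw [hbar₁, hP₁, smul_mul_assoc, mul_smul_comm, hμ, smul_smul, smul_smul, ← hs2]
    have hval : ((s:ℂ))⁻¹ * ((s:ℂ))⁻¹ * ((s:ℂ) * (s:ℂ)) = 1 := by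
      field_simp
    rw [hval, one_smul]
  have hreal₁' : P₁ * P₁.map (starRingEnd ℂ) = 1 := mul_eq_one_comm.mp hreal₁
  -- Schur 2 : P₁ᵀ * P₁ = c • 1
  have hTC : ∀ γ, P₁ᵀ * (M γ).map (starRingEnd ℂ) = M γ * P₁ᵀ := by
    intro γ
    have ht := congrArg Matrix.transpose (hPc₁ γ)
    rw [Matrix.transpose_mul, Matrix.transpose_mul] at ht
    -- ht : (M γ)ᵀ * P₁ᵀ = P₁ᵀ * ((M γ).map conj)ᵀ
    have h5 : (M γ)ᵀ * P₁ᵀ * (M γ).map (starRingEnd ℂ) = P₁ᵀ := by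
      rw [ht, mul_assoc, hCorth γ, mul_one]
    calc P₁ᵀ * (M γ).map (starRingEnd ℂ)
        = (M γ * (M γ)ᵀ) * (P₁ᵀ * (M γ).map (starRingEnd ℂ)) := by
          rw [hMorth' γ, one_mul]
      _ = M γ * ((M γ)ᵀ * P₁ᵀ * (M γ).map (starRingEnd ℂ)) := by noncomm_ring
      _ = M γ * P₁ᵀ := by rw [h5]
  obtain ⟨c, hc⟩ := schur_aux hm ρ hirr (P₁ᵀ * P₁) (by
    intro γ
    calc P₁ᵀ * P₁ * M γ = P₁ᵀ * ((M γ).map (starRingEnd ℂ) * P₁) := by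
          rw [← hPc₁ γ]; noncomm_ring
      _ = (P₁ᵀ * (M γ).map (starRingEnd ℂ)) * P₁ := by noncomm_ring
      _ = M γ * (P₁ᵀ * P₁) := by rw [hTC γ]; noncomm_ring)
  have hcne : c ≠ 0 := by
    intro h
    rw [h, zero_smul] at hc
    have : IsUnit ((P₁ᵀ * P₁).det) := by
      rw [Matrix.det_mul, Matrix.det_transpose]
      exact hP₁det.mul hP₁det
    rw [hc, (haveI : Nonempty (Fin m) := ⟨⟨0, hm⟩⟩; Matrix.det_zero)] at this
    exact this.ne_zero rfl
  -- |c| = 1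
  have hcbar : (P₁.map (starRingEnd ℂ))ᵀ * P₁.map (starRingEnd ℂ) = (starRingEnd ℂ) c • 1 := by
    have := congrArg (Matrix.map · (starRingEnd ℂ)) hc
    simpa only [map_conj_mul, map_conj_smul, map_conj_one, map_conj_transpose] using this
  have hbarT' : P₁ᵀ * (P₁.map (starRingEnd ℂ))ᵀ = 1 := by
    have := congrArg Matrix.transpose hreal₁
    rwa [Matrix.transpose_mul, Matrix.transpose_one] at this
  have hbarT : (P₁.map (starRingEnd ℂ))ᵀ * P₁ᵀ = 1 := mul_eq_one_comm.mp hbarT'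
  have hcP : P₁ = c • (P₁.map (starRingEnd ℂ))ᵀ := by
    calc P₁ = ((P₁.map (starRingEnd ℂ))ᵀ * P₁ᵀ) * P₁ := by rw [hbarT, one_mul]
      _ = (P₁.map (starRingEnd ℂ))ᵀ * (P₁ᵀ * P₁) := by noncomm_ring
      _ = c • (P₁.map (starRingEnd ℂ))ᵀ := by rw [hc, mul_smul_comm, mul_one]
  have hcP' : P₁.map (starRingEnd ℂ) = (starRingEnd ℂ) c • P₁ᵀ := by
    have := congrArg (Matrix.map · (starRingEnd ℂ)) hcP
    simpa only [map_conj_smul, map_conj_conj, ← map_conj_transpose, map_conj_conj] using this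
  have hccbar : c * (starRingEnd ℂ) c = 1 := by
    have hsub : P₁ = (c * (starRingEnd ℂ) c) • P₁ := by
      conv_lhs => rw [hcP]
      rw [hcP']
      rw [Matrix.transpose_smul, Matrix.transpose_transpose, smul_smul]
    have : (1 - c * (starRingEnd ℂ) c) • P₁ = 0 := by
      rw [sub_smul, one_smul, ← hsub, sub_self]
    rcases smul_eq_zero.mp this with h | h
    · have := sub_eq_zero.mp h
      linear_combination -this
    · exact absurd h hP₁ne
  -- choose t with t² = c⁻¹ and |t| = 1
  obtain ⟨t, ht⟩ := IsAlgClosed.exists_pow_nat_eq (k := ℂ) c⁻¹ (n := 2) (by norm_num)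
  have htc : t * t * c = 1 := by
    have : t * t = c⁻¹ := by rw [← ht]; ring
    rw [this]
    field_simp
  have hnormc : Complex.normSq c = 1 := by
    have : ((Complex.normSq c : ℝ) : ℂ) = 1 := by
      rw [← Complex.mul_conj]
      exact hccbar
    exact_mod_cast this
  have htbar : (starRingEnd ℂ) t * t = 1 := by
    have h1' : Complex.normSq t ^ 2 = 1 := by
      have : Complex.normSq (t * t) = Complex.normSq c⁻¹ := by
        rw [← ht]; ring_nf
      rw [Complex.normSq_mul, Complex.normSq_inv, hnormc] at this
      rw [sq]
      rw [this]
      norm_num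
    have h2' : Complex.normSq t = 1 := by
      nlinarith [Complex.normSq_nonneg t]
    have : ((Complex.normSq t : ℝ) : ℂ) = 1 := by exact_mod_cast h2'
    rw [← this, ← Complex.mul_conj]
    ring
  have htne : t ≠ 0 := by
    intro h
    rw [h] at htc
    simp at htc
  -- final normalization P₂
  set P₂ : Matrix (Fin m) (Fin m) ℂ := t • P₁ with hP₂
  set K : Matrix (Fin m) (Fin m) ℂ := P₂.map (starRingEnd ℂ) with hKdef
  have hPc₂ : ∀ γ, P₂ * M γ = (M γ).map (starRingEnd ℂ) * P₂ := by
    intro γ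
    rw [hP₂, smul_mul_assoc, mul_smul_comm, hPc₁ γ]
  have horto₂ : P₂ᵀ * P₂ = 1 := by
    rw [hP₂, Matrix.transpose_smul, smul_mul_assoc, mul_smul_comm, hc, smul_smul, smul_smul, htc, one_smul]
  have horto₂' : P₂ * P₂ᵀ = 1 := mul_eq_one_comm.mp horto₂
  have hKsmul : K = (starRingEnd ℂ) t • P₁.map (starRingEnd ℂ) := by
    rw [hKdef, hP₂, map_conj_smul]
  have hreal₂ : K * P₂ = 1 := by
    rw [hKsmul, hP₂, smul_mul_assoc, mul_smul_comm, hreal₁, smul_smul, htbar, one_smul]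
  have hP₂K : P₂ * K = 1 := mul_eq_one_comm.mp hreal₂
  have hKconj : K.map (starRingEnd ℂ) = P₂ := by
    rw [hKdef, map_conj_conj]
  have hKorth : Kᵀ * K = 1 := by
    have := congrArg (Matrix.map · (starRingEnd ℂ)) horto₂
    simpa only [map_conj_mul, map_conj_one, map_conj_transpose, ← hKdef] using this
  have hKM : ∀ γ, K * (M γ).map (starRingEnd ℂ) = M γ * K := by
    intro γ
    have := congrArg (Matrix.map · (starRingEnd ℂ)) (hPc₂ γ)
    simpa only [map_conj_mul, map_conj_conj, ← hKdef] using this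
  -- the real form
  set VR : Submodule ℝ (Fin m → ℂ) := realForm K with hVR
  have hrank : Module.finrank ℝ VR = m := finrank_realForm hreal₂ hP₂K hKconj
  have hstar : ∀ x ∈ VR, star x = P₂ *ᵥ x := by
    intro x hx
    rw [hVR, mem_realForm, sigmaL_apply] at hx
    conv_lhs => rw [← hx]
    rw [star_mulVec', hKconj, star_star]
  have hMVR : ∀ γ, ∀ x ∈ VR, M γ *ᵥ x ∈ VR := by
    intro γ x hx
    rw [hVR, mem_realForm, sigmaL_apply] at hx ⊢
    rw [star_mulVec', Matrix.mulVec_mulVec, hKM γ, ← Matrix.mulVec_mulVec, hx]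
  have hdot_inv : ∀ x y : Fin m → ℂ, (P₂ *ᵥ x) ⬝ᵥ (P₂ *ᵥ y) = x ⬝ᵥ y := by
    intro x y
    rw [Matrix.dotProduct_mulVec, ← Matrix.vecMul_transpose, Matrix.vecMul_vecMul,
      horto₂, Matrix.vecMul_one]
  have hrealdot : ∀ x ∈ VR, ∀ y ∈ VR, (starRingEnd ℂ) (x ⬝ᵥ y) = x ⬝ᵥ y := by
    intro x hx y hy
    have : (starRingEnd ℂ) (x ⬝ᵥ y) = star x ⬝ᵥ star y := by
      simp [dotProduct, map_sum, _root_.map_mul]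
    rw [this, hstar x hx, hstar y hy, hdot_inv]
  -- the real bilinear form on VR
  set BR : LinearMap.BilinForm ℝ VR := LinearMap.mk₂ ℝ
      (fun x y => (((x : Fin m → ℂ)) ⬝ᵥ ((y : Fin m → ℂ))).re)
      (by intro x y z
          rw [Submodule.coe_add, add_dotProduct, Complex.add_re])
      (by intro r x y
          rw [SetLike.val_smul, smul_dotProduct, Complex.smul_re])
      (by intro x y z
          rw [Submodule.coe_add, dotProduct_add, Complex.add_re])
      (by intro r x y
          rw [SetLike.val_smul, dotProduct_smul, Complex.smul_re]) with hBR
  have hBRapply : ∀ x y : VR, BR x y = (((x : Fin m → ℂ)) ⬝ᵥ ((y : Fin m → ℂ))).re := by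
    intro x y; rfl
  have hsymm : LinearMap.IsSymm BR := by
    refine LinearMap.isSymm_def.mpr ?_
    intro x y
    simp only [RingHom.id_apply, hBRapply, dotProduct_comm]
  have hdotBR : ∀ x y : VR, ((x : Fin m → ℂ)) ⬝ᵥ ((y : Fin m → ℂ)) = ((BR x y : ℝ) : ℂ) := by
    intro x y
    rw [hBRapply]
    exact (Complex.conj_eq_iff_re.mp (hrealdot x x.2 y y.2)).symm
  haveI : Invertible (2 : ℝ) := invertibleOfNonzero (by norm_num)
  obtain ⟨v0, hv0⟩ := LinearMap.BilinForm.exists_orthogonal_basis hsymm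
  set v : Module.Basis (Fin m) ℝ VR := v0.reindex (finCongr hrank) with hv
  have hvortho : ∀ i j : Fin m, i ≠ j → BR (v i) (v j) = 0 := by
    intro i j hij
    rw [hv, Module.Basis.reindex_apply, Module.Basis.reindex_apply]
    exact hv0 (fun h => hij (by simpa using congrArg (finCongr hrank) h))
  set d : Fin m → ℝ := fun i => BR (v i) (v i) with hd
  -- nondegeneracy : the diagonal entries are nonzero
  have hd0 : ∀ i, d i ≠ 0 := by
    intro i hdi
    have hall : ∀ y : VR, BR (v i) y = 0 := by
      intro y
      have hy := Module.Basis.sum_repr v y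
      rw [← hy, map_sum]
      refine Finset.sum_eq_zero fun j _ => ?_
      rw [LinearMap.map_smul]
      rcases eq_or_ne i j with rfl | hij
      · rw [show ((BR (v i)) (v i) : ℝ) = d i from rfl, hdi, smul_zero]
      · rw [hvortho i j hij, smul_zero]
    have hzero : ((v i : Fin m → ℂ)) = 0 := by
      have hdotz : ∀ z : Fin m → ℂ, ((v i : Fin m → ℂ)) ⬝ᵥ z = 0 := by
        intro z
        obtain ⟨u, hu, w, hw, hz⟩ := realForm_decomp hreal₂ hKconj z
        rw [hz, dotProduct_add, dotProduct_smul]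
        have h1' : ((v i : Fin m → ℂ)) ⬝ᵥ u = 0 := by
          rw [show u = ((⟨u, hu⟩ : VR) : Fin m → ℂ) from rfl, hdotBR, hall]
          norm_num
        have h2' : ((v i : Fin m → ℂ)) ⬝ᵥ w = 0 := by
          rw [show w = ((⟨w, hw⟩ : VR) : Fin m → ℂ) from rfl, hdotBR, hall]
          norm_num
        rw [h1', h2', smul_zero, add_zero]
      funext j
      have := hdotz (Pi.single j 1)
      rwa [dotProduct_single, mul_one] at this
    exact Module.Basis.ne_zero v i (Subtype.ext hzero)
  -- sorting the signs
  set f0 : Fin m → ℕ := fun i => if 0 < d i then 0 else 1 with hf0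
  set π : Equiv.Perm (Fin m) := Tuple.sort f0 with hπ
  set p : ℕ := (Finset.univ.filter (fun j => (f0 ∘ π) j = 0)).card with hp
  have hplt : ∀ j : Fin m, (0 < d (π j)) ↔ (j : ℕ) < p := by
    intro j
    have hmono := Tuple.monotone_sort f0
    have hcount := mono_count (f0 ∘ π) hmono j
    have heq : (f0 ∘ π) j = 0 ↔ 0 < d (π j) := by
      by_cases h : 0 < d (π j) <;> simp [hf0, Function.comp, h]
    exact heq.symm.trans hcount
  refine ⟨p, (Finset.univ.filter (fun j => ¬ (f0 ∘ π) j = 0)).card, ?_, ?_⟩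
  · rw [hp, Finset.card_filter_add_card_filter_not, Finset.card_univ, Fintype.card_fin]
  set w : Fin m → VR := fun j => ((Real.sqrt |d (π j)|)⁻¹ : ℝ) • v (π j) with hw
  have hwGram : ∀ j k : Fin m, BR (w j) (w k)
      = if j = k then (if (j:ℕ) < p then 1 else -1) else 0 := by
    intro j k
    have hsmul : BR (w j) (w k)
        = (Real.sqrt |d (π j)|)⁻¹ * ((Real.sqrt |d (π k)|)⁻¹ * BR (v (π j)) (v (π k))) := by
      rw [hw]
      dsimp only
      rw [LinearMap.map_smul₂, LinearMap.map_smul]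
      rfl
    rcases eq_or_ne j k with rfl | hjk
    · rw [if_pos rfl, hsmul]
      have hne := hd0 (π j)
      have h1 : Real.sqrt |d (π j)| * Real.sqrt |d (π j)| = |d (π j)| :=
        Real.mul_self_sqrt (abs_nonneg _)
      have ha : (Real.sqrt |d (π j)|)⁻¹ * (Real.sqrt |d (π j)|)⁻¹ = |d (π j)|⁻¹ := by
        rw [← mul_inv, h1]
      rw [show ((BR (v (π j))) (v (π j)) : ℝ) = d (π j) from rfl, ← mul_assoc, ha]
      by_cases hpos : 0 < d (π j)
      · rw [if_pos ((hplt j).mp hpos), abs_of_pos hpos, inv_mul_cancel₀ hne]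
      · have hneg : d (π j) < 0 := lt_of_le_of_ne (not_lt.mp hpos) hne
        rw [if_neg (fun hc => hpos ((hplt j).mpr hc)), abs_of_neg hneg, inv_neg, neg_mul,
          inv_mul_cancel₀ hne]
    · rw [if_neg hjk, hsmul]
      have : BR (v (π j)) (v (π k)) = 0 :=
        hvortho _ _ (fun h => hjk (π.injective h))
      rw [this, mul_zero, mul_zero]
  -- the matrix E of the normalized basis
  set E : Matrix (Fin m) (Fin m) ℂ := Matrix.of (fun i j => ((w j : Fin m → ℂ)) i) with hE
  have hEGram : Eᵀ * E = Ipq m p := by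
    ext j k
    rw [Matrix.mul_apply]
    have hsum : ∑ i, Eᵀ j i * E i k = ((w j : Fin m → ℂ)) ⬝ᵥ ((w k : Fin m → ℂ)) := by
      simp [dotProduct, hE, Matrix.transpose_apply]
    rw [hsum, hdotBR, hwGram j k, Ipq, Matrix.diagonal_apply]
    split_ifs <;> norm_num
  have hIpqdet : (Ipq m p).det ≠ 0 := by
    rw [Ipq, Matrix.det_diagonal]
    apply Finset.prod_ne_zero_iff.mpr
    intro i _
    split_ifs <;> norm_num
  have hdetE : IsUnit E.det := by
    apply isUnit_iff_ne_zero.mpr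
    intro h
    apply hIpqdet
    rw [← hEGram, Matrix.det_mul, h, mul_zero]
  have hdetET : IsUnit Eᵀ.det := by rwa [Matrix.det_transpose]
  have hEconj : E.map (starRingEnd ℂ) = P₂ * E := by
    ext i j
    rw [Matrix.map_apply, Matrix.mul_apply]
    have h1 : (starRingEnd ℂ) (E i j) = (star ((w j : Fin m → ℂ))) i := rfl
    rw [h1, hstar _ (SetLike.coe_mem (w j))]
    simp [Matrix.mulVec, dotProduct, hE]
  set D : Matrix (Fin m) (Fin m) ℂ := Dpq m p with hD
  have hD2 : D * D = Ipq m p := by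
    rw [hD, Dpq, Ipq, Matrix.diagonal_mul_diagonal]
    ext i j
    rcases eq_or_ne i j with rfl | hij
    · rw [Matrix.diagonal_apply_eq, Matrix.diagonal_apply_eq]
      by_cases h : (i:ℕ) < p
      · rw [if_pos h, if_pos h, one_mul]
      · rw [if_neg h, if_neg h, Complex.I_mul_I]
    · rw [Matrix.diagonal_apply_ne _ hij, Matrix.diagonal_apply_ne _ hij]
  have hDT : Dᵀ = D := by rw [hD, Dpq, Matrix.diagonal_transpose]
  have hdetD : IsUnit D.det := by
    rw [hD, Dpq, Matrix.det_diagonal]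
    apply isUnit_iff_ne_zero.mpr
    apply Finset.prod_ne_zero_iff.mpr
    intro i _
    split_ifs
    · norm_num
    · exact Complex.I_ne_zero
  refine ⟨D * E⁻¹, ?_, ?_⟩
  · show (D * E⁻¹)ᵀ * (D * E⁻¹) = 1
    calc (D * E⁻¹)ᵀ * (D * E⁻¹)
        = (E⁻¹)ᵀ * ((Dᵀ * D) * E⁻¹) := by rw [Matrix.transpose_mul]; noncomm_ring
      _ = (Eᵀ)⁻¹ * ((Eᵀ * E) * E⁻¹) := by
          rw [hDT, hD2, ← hEGram, Matrix.transpose_nonsing_inv]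
      _ = (Eᵀ)⁻¹ * Eᵀ * (E * E⁻¹) := by noncomm_ring
      _ = 1 := by
          rw [Matrix.nonsing_inv_mul _ hdetET, Matrix.mul_nonsing_inv _ hdetE, one_mul]
  · intro γ
    have hMγ : (ρ γ : Matrix (Fin m) (Fin m) ℂ) = M γ := rfl
    have hQinv : (D * E⁻¹)⁻¹ = E * D⁻¹ := by
      rw [Matrix.mul_inv_rev, Matrix.nonsing_inv_nonsing_inv _ hdetE]
    have hX : D⁻¹ * (D * E⁻¹) * M γ * (D * E⁻¹)⁻¹ * D = E⁻¹ * M γ * E := by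
      rw [hQinv]
      calc D⁻¹ * (D * E⁻¹) * M γ * (E * D⁻¹) * D
          = (D⁻¹ * D) * (E⁻¹ * M γ * E) * (D⁻¹ * D) := by noncomm_ring
        _ = E⁻¹ * M γ * E := by
            rw [Matrix.nonsing_inv_mul _ hdetD, one_mul, mul_one]
    rw [hMγ, hX]
    have hEinvconj : (E⁻¹).map (starRingEnd ℂ) = E⁻¹ * K := by
      have hl1 : (E⁻¹).map (starRingEnd ℂ) * (P₂ * E) = 1 := by
        rw [← hEconj, ← map_conj_mul, Matrix.nonsing_inv_mul _ hdetE, map_conj_one]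
      have hl2 : (E⁻¹ * K) * (P₂ * E) = 1 := by
        calc (E⁻¹ * K) * (P₂ * E) = E⁻¹ * ((K * P₂) * E) := by noncomm_ring
          _ = 1 := by rw [hreal₂, one_mul, Matrix.nonsing_inv_mul _ hdetE]
      rw [← Matrix.inv_eq_left_inv hl1, ← Matrix.inv_eq_left_inv hl2]
    constructor
    · rw [map_conj_mul, map_conj_mul, hEinvconj, hEconj]
      calc E⁻¹ * K * (M γ).map (starRingEnd ℂ) * (P₂ * E)
          = E⁻¹ * ((K * (M γ).map (starRingEnd ℂ)) * (P₂ * E)) := by noncomm_ring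
        _ = E⁻¹ * ((M γ * K) * (P₂ * E)) := by rw [hKM γ]
        _ = E⁻¹ * (M γ * ((K * P₂) * E)) := by noncomm_ring
        _ = E⁻¹ * M γ * E := by rw [hreal₂, one_mul]; noncomm_ring
    · calc (E⁻¹ * M γ * E)ᵀ * Ipq m p * (E⁻¹ * M γ * E)
          = Eᵀ * (M γ)ᵀ * ((E⁻¹)ᵀ * Eᵀ) * (E * E⁻¹) * M γ * E := by
            rw [← hEGram, Matrix.transpose_mul, Matrix.transpose_mul]
            noncomm_ring
        _ = Eᵀ * ((M γ)ᵀ * M γ) * E := by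
            rw [Matrix.transpose_nonsing_inv, Matrix.nonsing_inv_mul _ hdetET,
              Matrix.mul_nonsing_inv _ hdetE]
            noncomm_ring
        _ = Ipq m p := by rw [hMorth γ, mul_one, hEGram]

end main


theorem stmt7 {Γ : Type*} [Group Γ] (n : ℕ)
    (ρ : Γ →* Matrix.GeneralLinearGroup (Fin (2 * n + 1)) ℂ)
    (ho : ∀ γ : Γ, IsOrthoC (ρ γ : Matrix (Fin (2 * n + 1)) (Fin (2 * n + 1)) ℂ))
    (hirr : MatIrreducible ρ)
    (P : Matrix (Fin (2 * n + 1)) (Fin (2 * n + 1)) ℂ) (hP : IsUnit P)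
    (hconj : ∀ γ : Γ,
      P * (ρ γ : Matrix (Fin (2 * n + 1)) (Fin (2 * n + 1)) ℂ) * P⁻¹
        = (ρ γ : Matrix (Fin (2 * n + 1)) (Fin (2 * n + 1)) ℂ).map (starRingEnd ℂ)) :
    ∃ p q : ℕ, p + q = 2 * n + 1 ∧
      ∃ Q : Matrix (Fin (2 * n + 1)) (Fin (2 * n + 1)) ℂ, IsOrthoC Q ∧
        ∀ γ : Γ,
          ((Dpq (2 * n + 1) p)⁻¹ * Q * (ρ γ : Matrix (Fin (2 * n + 1)) (Fin (2 * n + 1)) ℂ)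
              * Q⁻¹ * Dpq (2 * n + 1) p).map (starRingEnd ℂ)
            = (Dpq (2 * n + 1) p)⁻¹ * Q * (ρ γ : Matrix (Fin (2 * n + 1)) (Fin (2 * n + 1)) ℂ)
              * Q⁻¹ * Dpq (2 * n + 1) p ∧
          ((Dpq (2 * n + 1) p)⁻¹ * Q * (ρ γ : Matrix (Fin (2 * n + 1)) (Fin (2 * n + 1)) ℂ)
              * Q⁻¹ * Dpq (2 * n + 1) p)ᵀ * Ipq (2 * n + 1) p *
            ((Dpq (2 * n + 1) p)⁻¹ * Q * (ρ γ : Matrix (Fin (2 * n + 1)) (Fin (2 * n + 1)) ℂ)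
              * Q⁻¹ * Dpq (2 * n + 1) p)
            = Ipq (2 * n + 1) p := by
  exact main_aux ⟨n, by ring⟩ ρ ho hirr P hP hconj
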